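/- Let Λ be a locally-convex k-graph. Then Λ^{≤ m+n} ⊆ Λ^{≤m} Λ^{≤n} for all m, n ∈ ℕ^k: every λ ∈ Λ^{≤ m+n} factors as λ = μν with μ ∈ Λ^{≤m} and ν ∈ Λ^{≤n}; indeed one may take μ = λ(0, m ∧ d(λ)) and ν = λ(m ∧ d(λ), d(λ)). -/

import Mathlib

/-- A `k`-graph: a countable small category `Λ` together with a degree functor
`d : Λ → ℕᵏ` satisfying the unique factorisation property.  Morphisms are called
paths; `comp μ ν` is the composite `μν`, only meaningful when `s μ = r ν`. -/
structure KGraph (k : ℕ) where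
  Path : Type
  Obj : Type
  pathCountable : Countable Path
  r : Path → Obj
  s : Path → Obj
  d : Path → Fin k → ℕ
  comp : Path → Path → Path
  ident : Obj → Path
  r_ident : ∀ v, r (ident v) = v
  s_ident : ∀ v, s (ident v) = v
  d_ident : ∀ v, d (ident v) = 0
  r_comp : ∀ μ ν, s μ = r ν → r (comp μ ν) = r μ
  s_comp : ∀ μ ν, s μ = r ν → s (comp μ ν) = s ν
  d_comp : ∀ μ ν, s μ = r ν → d (comp μ ν) = d μ + d ν
  ident_comp : ∀ lam, comp (ident (r lam)) lam = lam
  comp_ident : ∀ lam, comp lam (ident (s lam)) = lam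
  comp_assoc : ∀ lam μ ν, s lam = r μ → s μ = r ν →
    comp (comp lam μ) ν = comp lam (comp μ ν)
  factor : ∀ (lam : Path) (m n : Fin k → ℕ), d lam = m + n →
    ∃! p : Path × Path, s p.1 = r p.2 ∧ d p.1 = m ∧ d p.2 = n ∧ lam = comp p.1 p.2

/-- The `i`-th standard generator `e_i` of `ℕᵏ`. -/
def eVec {k : ℕ} (i : Fin k) : Fin k → ℕ := Pi.single i 1

namespace KGraph

variable {k : ℕ} (G : KGraph k)

/-- `lam` extends `μ`, i.e. `lam ∈ μΛ`. -/
def Extends (lam μ : G.Path) : Prop := ∃ α, G.s μ = G.r α ∧ lam = G.comp μ α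

/-- `CE(μ,ν)`: common extensions of `μ` and `ν`. -/
def CE (μ ν : G.Path) : Set G.Path := {lam | G.Extends lam μ ∧ G.Extends lam ν}

/-- `MCE(μ,ν)`: minimal common extensions of `μ` and `ν` (degree `d μ ⊔ d ν`). -/
def MCE (μ ν : G.Path) : Set G.Path :=
  {lam | lam ∈ G.CE μ ν ∧ G.d lam = G.d μ ⊔ G.d ν}

/-- `Λ^min(μ,ν)`: pairs `(α,β)` with `μα = νβ ∈ MCE(μ,ν)`. -/
def minPairs (μ ν : G.Path) : Set (G.Path × G.Path) :=
  {p | G.s μ = G.r p.1 ∧ G.s ν = G.r p.2 ∧ G.comp μ p.1 = G.comp ν p.2 ∧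
    G.comp μ p.1 ∈ G.MCE μ ν}

/-- `Λ` is finitely aligned if each `Λ^min(μ,ν)` is finite. -/
def FinitelyAligned : Prop := ∀ μ ν : G.Path, (G.minPairs μ ν).Finite

/-- `Λ` is locally-convex. -/
def LocallyConvex : Prop :=
  ∀ (i j : Fin k), i ≠ j → ∀ lam μ : G.Path,
    G.d lam = eVec i → G.d μ = eVec j → G.r lam = G.r μ →
    (∃ η, G.d η = eVec j ∧ G.r η = G.s lam) ∧
    (∃ η, G.d η = eVec i ∧ G.r η = G.s μ)

/-- `Λ^{≤ n}`. -/
def LeSet (n : Fin k → ℕ) : Set G.Path :=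
  {lam | G.d lam ≤ n ∧
    ∀ i, G.d lam i < n i → ¬∃ η, G.d η = eVec i ∧ G.r η = G.s lam}

open Classical in
/-- Split a path `lam` at degree `m ≤ d lam` into `(lam(0,m), lam(m, d lam))`. -/
noncomputable def split (lam : G.Path) (m : Fin k → ℕ) : G.Path × G.Path :=
  if h : m ≤ G.d lam then
    (G.factor lam m (G.d lam - m)
      (funext fun i => (Nat.add_sub_cancel' ((Pi.le_def.mp h) i)).symm)).exists.choose
  else (lam, lam)

/-- The segment `lam(m,n)` (for `m ≤ n ≤ d lam`), of degree `n - m`. -/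
noncomputable def seg (lam : G.Path) (m n : Fin k → ℕ) : G.Path :=
  (G.split (G.split lam n).1 m).2

end KGraph

/-!
Split `λ` at `q = m ⊓ d(λ)` as `λ = μν`. The second factor inherits from `λ` both the degree bound and
the absence of edges at `s(ν) = s(λ)`. For the first factor, a coordinate `i` with `q_i < m_i` has
`q_i = d(λ)_i`, so `d(ν)_i = 0`; local convexity lets an `e_i`-edge at `r(ν) = s(μ)` be pushed one
edge at a time along `ν`, which has no `e_i`-component, to an `e_i`-edge at `s(λ)`, contradicting
`λ ∈ Λ^{≤ m+n}` since `d(λ)_i < m_i`.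
-/

namespace KGraph

variable {k : ℕ} (G : KGraph k)

/-- `vΛ^{e_i} ≠ ∅`. -/
def HasEdgeAt (i : Fin k) (v : G.Obj) : Prop := ∃ η, G.d η = eVec i ∧ G.r η = v

lemma mem_leSet {lam : G.Path} {n : Fin k → ℕ} :
    lam ∈ G.LeSet n ↔ G.d lam ≤ n ∧ ∀ i, G.d lam i < n i → ¬G.HasEdgeAt i (G.s lam) :=
  Iff.rfl

lemma eq_ident_of_d_eq_zero {ν : G.Path} (h : G.d ν = 0) : ν = G.ident (G.r ν) := by
  have hd : G.d ν = 0 + 0 := by rw [h, add_zero]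
  have := (G.factor ν 0 0 hd).unique
    (y₁ := (ν, G.ident (G.s ν))) (y₂ := (G.ident (G.r ν), ν))
    ⟨(G.r_ident _).symm, h, G.d_ident _, (G.comp_ident ν).symm⟩
    ⟨G.s_ident _, G.d_ident _, h, (G.ident_comp ν).symm⟩
  exact congrArg Prod.fst this

lemma s_eq_r_of_d_eq_zero {ν : G.Path} (h : G.d ν = 0) : G.s ν = G.r ν := by
  rw [G.eq_ident_of_d_eq_zero h, G.s_ident, G.r_ident]

lemma exists_eq_comp_of_d_pos {ν : G.Path} {j : Fin k} (hj : 0 < G.d ν j) :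
    ∃ ε ν', G.s ε = G.r ν' ∧ G.d ε = eVec j ∧ ν = G.comp ε ν' := by
  have hle : eVec j ≤ G.d ν := fun l => by
    by_cases hl : l = j
    · subst hl; simp only [eVec, Pi.single_eq_same]; exact hj
    · simp [eVec, hl]
  obtain ⟨⟨ε, ν'⟩, ⟨hs, hd, -, hcomp⟩, -⟩ :=
    G.factor ν (eVec j) (G.d ν - eVec j) (add_tsub_cancel_of_le hle).symm
  exact ⟨ε, ν', hs, hd, hcomp⟩

lemma split_spec (lam : G.Path) {m : Fin k → ℕ} (h : m ≤ G.d lam) :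
    G.s (G.split lam m).1 = G.r (G.split lam m).2 ∧ G.d (G.split lam m).1 = m ∧
      G.d (G.split lam m).2 = G.d lam - m ∧
      lam = G.comp (G.split lam m).1 (G.split lam m).2 := by
  rw [split, dif_pos h]
  exact (G.factor lam m (G.d lam - m) (add_tsub_cancel_of_le h).symm).exists.choose_spec

lemma split_eq_of_spec (lam : G.Path) {m : Fin k → ℕ} (h : m ≤ G.d lam) (p : G.Path × G.Path)
    (hp : G.s p.1 = G.r p.2 ∧ G.d p.1 = m ∧ G.d p.2 = G.d lam - m ∧ lam = G.comp p.1 p.2) :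
    G.split lam m = p :=
  (G.factor lam m (G.d lam - m) (add_tsub_cancel_of_le h).symm).unique (G.split_spec lam h) hp

lemma s_split_snd (lam : G.Path) {m : Fin k → ℕ} (h : m ≤ G.d lam) :
    G.s (G.split lam m).2 = G.s lam := by
  obtain ⟨hs, -, -, hcomp⟩ := G.split_spec lam h
  calc G.s (G.split lam m).2 = G.s (G.comp (G.split lam m).1 (G.split lam m).2) :=
        (G.s_comp _ _ hs).symm
    _ = G.s lam := congrArg G.s hcomp.symm

lemma split_zero (lam : G.Path) : G.split lam 0 = (G.ident (G.r lam), lam) :=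
  G.split_eq_of_spec lam zero_le _
    ⟨G.s_ident _, G.d_ident _, (tsub_zero _).symm, (G.ident_comp lam).symm⟩

lemma split_d (lam : G.Path) : G.split lam (G.d lam) = (lam, G.ident (G.s lam)) :=
  G.split_eq_of_spec lam le_rfl _
    ⟨(G.r_ident _).symm, rfl, by rw [G.d_ident, tsub_self], (G.comp_ident lam).symm⟩

lemma seg_zero_eq_split_fst (lam : G.Path) (m : Fin k → ℕ) :
    G.seg lam 0 m = (G.split lam m).1 := by
  rw [seg, split_zero]

lemma seg_d_eq_split_snd (lam : G.Path) (m : Fin k → ℕ) :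
    G.seg lam m (G.d lam) = (G.split lam m).2 := by
  rw [seg, split_d]

variable {G}

lemma LocallyConvex.hasEdgeAt_s_of_edge (hlc : G.LocallyConvex) {i j : Fin k} (hij : i ≠ j)
    {ε : G.Path} (hε : G.d ε = eVec j) (h : G.HasEdgeAt i (G.r ε)) : G.HasEdgeAt i (G.s ε) := by
  obtain ⟨η, hηd, hηr⟩ := h
  exact (hlc i j hij η ε hηd hε hηr).2

lemma LocallyConvex.hasEdgeAt_s_of_d_eq_zero (hlc : G.LocallyConvex) {i : Fin k} {ν : G.Path}
    (hνi : G.d ν i = 0) (h : G.HasEdgeAt i (G.r ν)) : G.HasEdgeAt i (G.s ν) := by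
  suffices ∀ n, ∀ ν : G.Path, G.d ν = n → G.d ν i = 0 → G.HasEdgeAt i (G.r ν) →
      G.HasEdgeAt i (G.s ν) from this _ ν rfl hνi h
  intro n
  induction n using WellFoundedLT.induction with
  | _ n ih =>
    rintro ν rfl hνi h
    by_cases h0 : G.d ν = 0
    · rwa [G.s_eq_r_of_d_eq_zero h0]
    obtain ⟨j, hj⟩ : ∃ j, 0 < G.d ν j := by
      by_contra! hc
      exact h0 (funext fun l => Nat.le_zero.mp (hc l))
    have hij : i ≠ j := by rintro rfl; omega
    obtain ⟨ε, ν', hs, hε, rfl⟩ := G.exists_eq_comp_of_d_pos hj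
    have hd : G.d (G.comp ε ν') = eVec j + G.d ν' := by rw [G.d_comp _ _ hs, hε]
    have hν'i : G.d ν' i = 0 := by simpa [hd, eVec, hij] using hνi
    have hlt : G.d ν' < G.d (G.comp ε ν') := by
      rw [hd]
      exact lt_add_of_pos_left _ (Pi.single_pos.mpr one_pos)
    rw [G.s_comp _ _ hs]
    refine ih _ hlt ν' rfl hν'i ?_
    rw [← hs]
    exact hlc.hasEdgeAt_s_of_edge hij hε (G.r_comp _ _ hs ▸ h)

lemma split_inf_snd_mem_leSet {m n : Fin k → ℕ} {lam : G.Path} (h : lam ∈ G.LeSet (m + n)) :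
    (G.split lam (m ⊓ G.d lam)).2 ∈ G.LeSet n := by
  obtain ⟨hle, hmax⟩ := G.mem_leSet.mp h
  obtain ⟨-, -, hdν, -⟩ := G.split_spec lam (inf_le_right : m ⊓ G.d lam ≤ _)
  rw [mem_leSet, G.s_split_snd lam inf_le_right, hdν]
  refine ⟨fun l => ?_, fun i hi => hmax i ?_⟩
  · have := hle l
    simp only [Pi.sub_apply, Pi.inf_apply, Pi.add_apply] at this ⊢
    omega
  · have := hle i
    simp only [Pi.sub_apply, Pi.inf_apply, Pi.add_apply] at this hi ⊢
    omega

lemma LocallyConvex.split_inf_fst_mem_leSet (hlc : G.LocallyConvex) {m n : Fin k → ℕ}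
    {lam : G.Path} (h : lam ∈ G.LeSet (m + n)) :
    (G.split lam (m ⊓ G.d lam)).1 ∈ G.LeSet m := by
  obtain ⟨hle, hmax⟩ := G.mem_leSet.mp h
  obtain ⟨hs, hdμ, hdν, -⟩ := G.split_spec lam (inf_le_right : m ⊓ G.d lam ≤ _)
  rw [mem_leSet, hdμ]
  refine ⟨inf_le_left, fun i hi hedge => hmax i ?_ ?_⟩
  · simp only [Pi.inf_apply, Pi.add_apply] at hi ⊢
    omega
  · have hνi : G.d (G.split lam (m ⊓ G.d lam)).2 i = 0 := by
      simp only [hdν, Pi.sub_apply, Pi.inf_apply] at hi ⊢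
      omega
    rw [← G.s_split_snd lam inf_le_right]
    exact hlc.hasEdgeAt_s_of_d_eq_zero hνi (hs ▸ hedge)

end KGraph

/-- in a locally-convex `k`-graph, `Λ^{≤ m+n} ⊆ Λ^{≤m} Λ^{≤n}`;
indeed `lam = lam(0, m ⊓ d lam) · lam(m ⊓ d lam, d lam)` with the first factor
in `Λ^{≤ m}` and the second in `Λ^{≤ n}`. -/
theorem stmt8 {k : ℕ} (G : KGraph k) (hlc : G.LocallyConvex) (m n : Fin k → ℕ)
    (lam : G.Path) (h : lam ∈ G.LeSet (m + n)) :
    G.seg lam 0 (m ⊓ G.d lam) ∈ G.LeSet m ∧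
    G.seg lam (m ⊓ G.d lam) (G.d lam) ∈ G.LeSet n ∧
    lam = G.comp (G.seg lam 0 (m ⊓ G.d lam)) (G.seg lam (m ⊓ G.d lam) (G.d lam)) := by
  rw [G.seg_zero_eq_split_fst, G.seg_d_eq_split_snd]
  exact ⟨hlc.split_inf_fst_mem_leSet h, KGraph.split_inf_snd_mem_leSet h,
    (G.split_spec lam inf_le_right).2.2.2⟩
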